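/- Let φ : Fin m → Fin n be monotone with φ(0) = 0 and right adjoint φ*, let k be the cardinality of the image of φ, and let σ : Fin m → Fin k and δ : Fin k → Fin n be the monotone surjection and monotone injection with φ = δ ∘ σ, with right adjoints σ* and δ*. Let u ⊆ Fin m and v ⊆ Fin n. Then φ and φ* restrict to mutually inverse bijections between u and v if and only if: σ and σ* restrict to mutually inverse bijections between u and σ(u), and δ and δ* restrict to mutually inverse bijections between σ(u) and v. -/
import Mathlib


/-- `ψ` and `ψs` restrict to mutually inverse bijections between `u` and `v`. -/
def MutInv {a b : ℕ} (ψ : Fin a → Fin b) (ψs : Fin b → Fin a)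
    (u : Set (Fin a)) (v : Set (Fin b)) : Prop :=
  (∀ j ∈ u, ψ j ∈ v) ∧ (∀ i ∈ v, ψs i ∈ u) ∧
  (∀ j ∈ u, ψs (ψ j) = j) ∧ (∀ i ∈ v, ψ (ψs i) = i)

/-- mutually inverse bijections for `φ` decompose along the epi-mono
factorisation `φ = δ ∘ σ`. -/
theorem stmt12 {m n k : ℕ} (hm : 0 < m) (hn : 0 < n)
    (φ : Fin m → Fin n) (hφ : Monotone φ) (hφ0 : φ ⟨0, hm⟩ = ⟨0, hn⟩)
    (φs : Fin n → Fin m) (hφadj : ∀ i j, φ i ≤ j ↔ i ≤ φs j)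
    (σ : Fin m → Fin k) (hσm : Monotone σ) (hσsurj : Function.Surjective σ)
    (δ : Fin k → Fin n) (hδm : Monotone δ) (hδinj : Function.Injective δ)
    (hfact : ∀ i, φ i = δ (σ i))
    (σs : Fin k → Fin m) (hσadj : ∀ i j, σ i ≤ j ↔ i ≤ σs j)
    (δs : Fin n → Fin k) (hδadj : ∀ i j, δ i ≤ j ↔ i ≤ δs j)
    (u : Set (Fin m)) (v : Set (Fin n)) :
    MutInv φ φs u v ↔
      (MutInv σ σs u (σ '' u) ∧ MutInv δ δs (σ '' u) v) := by
  -- σ ∘ σs = id (σ surjective)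
  have hσsec : ∀ x, σ (σs x) = x := by
    intro x
    obtain ⟨i, hi⟩ := hσsurj x
    refine le_antisymm ((hσadj _ _).mpr le_rfl) ?_
    rw [← hi]
    exact hi ▸ hσm ((hσadj i x).mp (le_of_eq hi))
  -- δs ∘ δ = id (δ injective)
  have hδret : ∀ x, δs (δ x) = x := by
    intro x
    refine le_antisymm ?_ ((hδadj _ _).mp le_rfl)
    have h := (hδadj (δs (δ x)) (δ x)).mpr le_rfl
    exact (hδm.strictMono_of_injective hδinj).le_iff_le.mp h
  -- φs = σs ∘ δs
  have hφs : ∀ x, φs x = σs (δs x) := by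
    intro x
    have key : ∀ i, i ≤ φs x ↔ i ≤ σs (δs x) := by
      intro i
      rw [← hφadj, hfact, hδadj, hσadj]
    exact le_antisymm ((key _).mp le_rfl) ((key _).mpr le_rfl)
  constructor
  · rintro ⟨h1, h2, h3, h4⟩
    refine ⟨⟨fun j hj => ⟨j, hj, rfl⟩, ?_, ?_, fun x _ => hσsec x⟩,
      ⟨?_, ?_, fun x _ => hδret _, ?_⟩⟩
    · rintro i ⟨j, hj, rfl⟩
      have := h3 j hj
      rw [hfact, hφs, hδret] at this
      rw [this]; exact hj
    · intro j hj
      have := h3 j hj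
      rwa [hfact, hφs, hδret] at this
    · rintro i ⟨j, hj, rfl⟩
      have := h1 j hj
      rwa [hfact] at this
    · intro i hi
      refine ⟨φs i, h2 i hi, ?_⟩
      rw [hφs, hσsec]
    · intro i hi
      have := h4 i hi
      rwa [hfact, hφs, hσsec] at this
  · rintro ⟨⟨s1, s2, s3, _⟩, ⟨d1, d2, _, d4⟩⟩
    refine ⟨?_, ?_, ?_, ?_⟩
    · intro j hj
      rw [hfact]
      exact d1 _ ⟨j, hj, rfl⟩
    · intro i hi
      rw [hφs]
      exact s2 _ (d2 i hi)
    · intro j hj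
      rw [hfact, hφs, hδret]
      exact s3 j hj
    · intro i hi
      rw [hfact, hφs, hσsec]
      exact d4 i hi
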